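/- arXiv:1601.05243 — 3 statements merged into one kernel-verified Lean document; each statement's English description precedes it below -/
import Mathlib

section
/- (Expansion of the twisted form.) Let N ≥ 1 be an integer, λ ∈ ℝ, let φ : ℝ^N → ℝ be a smooth function all of whose partial derivatives of order 1 and 2 are bounded, and let u : ℝ^N → ℂ be smooth and compactly supported. Then ∫ Δ(e^{−λφ}u) · conj(Δ(e^{λφ}u)) dx = ∫ |Δu|² dx + λ⁴ ∫ |∇φ|⁴ |u|² dx − λ² ∫ |Δφ|² |u|² dx + 4λ³ i Im ∫ |∇φ|² (∇φ·∇ū) u dx + 2λ² Re ∫ |∇φ|² u Δū dx − 4λ² Re ∫ Δφ (∇φ·∇ū) u dx + 2λ i Im ∫ Δφ ū Δu dx − 4λ² ∫ |∇φ·∇u|² dx + 4λ i Im ∫ (∇φ·∇ū) Δu dx, where ū = conj(u) and all integrals are over ℝ^N. -/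
open MeasureTheory

/-- The Laplacian of a function `u : ℝ^N → ℂ`, as the sum of the second partial
derivatives in the coordinate directions. -/
noncomputable def lap {N : ℕ} (u : EuclideanSpace ℝ (Fin N) → ℂ)
    (x : EuclideanSpace ℝ (Fin N)) : ℂ :=
  ∑ i : Fin N,
    fderiv ℝ (fun y => fderiv ℝ u y (EuclideanSpace.single i 1)) x (EuclideanSpace.single i 1)

/-- The Laplacian of a real-valued function on `ℝ^N`. -/
noncomputable def lapR {N : ℕ} (φ : EuclideanSpace ℝ (Fin N) → ℝ)
    (x : EuclideanSpace ℝ (Fin N)) : ℝ :=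
  ∑ i : Fin N,
    fderiv ℝ (fun y => fderiv ℝ φ y (EuclideanSpace.single i 1)) x (EuclideanSpace.single i 1)

/-- The `i`-th partial derivative of `u : ℝ^N → ℂ`. -/
noncomputable def pdC {N : ℕ} (u : EuclideanSpace ℝ (Fin N) → ℂ) (i : Fin N)
    (x : EuclideanSpace ℝ (Fin N)) : ℂ :=
  fderiv ℝ u x (EuclideanSpace.single i 1)

/-- The `i`-th partial derivative of `φ : ℝ^N → ℝ`. -/
noncomputable def pdR {N : ℕ} (φ : EuclideanSpace ℝ (Fin N) → ℝ) (i : Fin N)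
    (x : EuclideanSpace ℝ (Fin N)) : ℝ :=
  fderiv ℝ φ x (EuclideanSpace.single i 1)

/-- `|∇φ(x)|²`, the squared Euclidean norm of the gradient of `φ`. -/
noncomputable def gradNormSq {N : ℕ} (φ : EuclideanSpace ℝ (Fin N) → ℝ)
    (x : EuclideanSpace ℝ (Fin N)) : ℝ :=
  ∑ i : Fin N, (pdR φ i x) ^ 2

/-- The (bilinear, not conjugated) dot product `∇φ·∇u` of the gradients. -/
noncomputable def gradDot {N : ℕ} (φ : EuclideanSpace ℝ (Fin N) → ℝ)
    (u : EuclideanSpace ℝ (Fin N) → ℂ) (x : EuclideanSpace ℝ (Fin N)) : ℂ :=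
  ∑ i : Fin N, (pdR φ i x : ℂ) * pdC u i x

/-- The dot product `∇φ·∇ū` of the gradient of `φ` with the gradient of `conj u`. -/
noncomputable def gradDotBar {N : ℕ} (φ : EuclideanSpace ℝ (Fin N) → ℝ)
    (u : EuclideanSpace ℝ (Fin N) → ℂ) (x : EuclideanSpace ℝ (Fin N)) : ℂ :=
  ∑ i : Fin N, (pdR φ i x : ℂ) * (starRingEnd ℂ) (pdC u i x)

section Helpers

variable {N : ℕ}

lemma contDiff_pd' {F : Type*} [NormedAddCommGroup F] [NormedSpace ℝ F]
    {f : EuclideanSpace ℝ (Fin N) → F} (hf : ContDiff ℝ (⊤ : ℕ∞) f) (v : EuclideanSpace ℝ (Fin N)) :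
    ContDiff ℝ (⊤ : ℕ∞) (fun y => fderiv ℝ f y v) :=
  (hf.fderiv_right (by simp)).clm_apply contDiff_const

lemma pd_ofReal' {ψ : EuclideanSpace ℝ (Fin N) → ℝ} {x : EuclideanSpace ℝ (Fin N)}
    (hψ : DifferentiableAt ℝ ψ x) (v : EuclideanSpace ℝ (Fin N)) :
    fderiv ℝ (fun y => (ψ y : ℂ)) x v = ↑(fderiv ℝ ψ x v) := by
  have h : HasFDerivAt (fun y => (ψ y : ℂ)) (Complex.ofRealCLM.comp (fderiv ℝ ψ x)) x :=
    Complex.ofRealCLM.hasFDerivAt.comp x hψ.hasFDerivAt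
  rw [h.fderiv]; rfl

lemma pd_mul_apply' {f g : EuclideanSpace ℝ (Fin N) → ℂ} {x : EuclideanSpace ℝ (Fin N)}
    (hf : DifferentiableAt ℝ f x) (hg : DifferentiableAt ℝ g x) (v : EuclideanSpace ℝ (Fin N)) :
    fderiv ℝ (fun y => f y * g y) x v
      = fderiv ℝ f x v * g x + f x * fderiv ℝ g x v := by
  rw [fderiv_fun_mul hf hg]
  simp [smul_eq_mul]
  ring

lemma pd_mul_fun' {f g : EuclideanSpace ℝ (Fin N) → ℂ} (hf : ContDiff ℝ (⊤ : ℕ∞) f)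
    (hg : ContDiff ℝ (⊤ : ℕ∞) g) (v : EuclideanSpace ℝ (Fin N)) :
    (fun y => fderiv ℝ (fun z => f z * g z) y v)
      = fun y => fderiv ℝ f y v * g y + f y * fderiv ℝ g y v := by
  funext y
  exact pd_mul_apply' (hf.differentiable (by simp) y) (hg.differentiable (by simp) y) v

lemma pd2_mul' {f g : EuclideanSpace ℝ (Fin N) → ℂ} (hf : ContDiff ℝ (⊤ : ℕ∞) f)
    (hg : ContDiff ℝ (⊤ : ℕ∞) g) (v : EuclideanSpace ℝ (Fin N)) (x : EuclideanSpace ℝ (Fin N)) :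
    fderiv ℝ (fun y => fderiv ℝ (fun z => f z * g z) y v) x v
      = fderiv ℝ (fun y => fderiv ℝ f y v) x v * g x
        + 2 * (fderiv ℝ f x v * fderiv ℝ g x v)
        + f x * fderiv ℝ (fun y => fderiv ℝ g y v) x v := by
  rw [pd_mul_fun' hf hg v]
  have hdf := hf.differentiable (by simp)
  have hdg := hg.differentiable (by simp)
  have hdf' := (contDiff_pd' hf v).differentiable (by simp)
  have hdg' := (contDiff_pd' hg v).differentiable (by simp)
  rw [fderiv_fun_add (f := fun y => fderiv ℝ f y v * g y) (g := fun y => f y * fderiv ℝ g y v)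
    ((hdf' x).mul (hdg x)) ((hdf x).mul (hdg' x))]
  simp only [ContinuousLinearMap.add_apply]
  rw [pd_mul_apply' (hdf' x) (hdg x) v, pd_mul_apply' (hdf x) (hdg' x) v]
  ring

lemma lap_mul' {f g : EuclideanSpace ℝ (Fin N) → ℂ} (hf : ContDiff ℝ (⊤ : ℕ∞) f)
    (hg : ContDiff ℝ (⊤ : ℕ∞) g) (x : EuclideanSpace ℝ (Fin N)) :
    lap (fun y => f y * g y) x
      = lap f x * g x + 2 * (∑ i, pdC f i x * pdC g i x) + f x * lap g x := by
  unfold lap pdC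
  simp only [Finset.sum_mul, Finset.mul_sum]
  rw [← Finset.sum_add_distrib, ← Finset.sum_add_distrib]
  refine Finset.sum_congr rfl fun i _ => ?_
  rw [pd2_mul' hf hg _ x]

lemma expc_contDiff' {φ : EuclideanSpace ℝ (Fin N) → ℝ} (c : ℝ) (hφ : ContDiff ℝ (⊤ : ℕ∞) φ) :
    ContDiff ℝ (⊤ : ℕ∞) (fun y => (Real.exp (c * φ y) : ℂ)) :=
  Complex.ofRealCLM.contDiff.comp (Real.contDiff_exp.comp (contDiff_const.mul hφ))

lemma pd_expc' {φ : EuclideanSpace ℝ (Fin N) → ℝ} (c : ℝ) (hφ : ContDiff ℝ (⊤ : ℕ∞) φ)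
    (x v : EuclideanSpace ℝ (Fin N)) :
    fderiv ℝ (fun y => (Real.exp (c * φ y) : ℂ)) x v
      = ↑(c * fderiv ℝ φ x v) * (Real.exp (c * φ x) : ℂ) := by
  have h1 : HasFDerivAt (fun y => c * φ y) (c • fderiv ℝ φ x) x :=
    ((hφ.differentiable (by simp) x).hasFDerivAt).const_mul c
  have h2 : HasFDerivAt (fun y => Real.exp (c * φ y))
      (Real.exp (c * φ x) • (c • fderiv ℝ φ x)) x :=
    by have := HasDerivAt.comp_hasFDerivAt (𝕜 := ℝ) x (Real.hasDerivAt_exp (c * φ x)) h1; exact this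
  have h3 : HasFDerivAt (fun y => (Real.exp (c * φ y) : ℂ))
      (Complex.ofRealCLM.comp (Real.exp (c * φ x) • (c • fderiv ℝ φ x))) x :=
    Complex.ofRealCLM.hasFDerivAt.comp x h2
  rw [h3.fderiv]
  simp [smul_eq_mul]
  push_cast
  ring

lemma pd2_expc' {φ : EuclideanSpace ℝ (Fin N) → ℝ} (c : ℝ) (hφ : ContDiff ℝ (⊤ : ℕ∞) φ)
    (x v : EuclideanSpace ℝ (Fin N)) :
    fderiv ℝ (fun y => fderiv ℝ (fun z => (Real.exp (c * φ z) : ℂ)) y v) x v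
      = (↑(c * fderiv ℝ (fun y => fderiv ℝ φ y v) x v)
          + (↑(c * fderiv ℝ φ x v) : ℂ) ^ 2) * (Real.exp (c * φ x) : ℂ) := by
  have hrw : (fun y => fderiv ℝ (fun z => (Real.exp (c * φ z) : ℂ)) y v)
      = fun y => ↑(c * fderiv ℝ φ y v) * (Real.exp (c * φ y) : ℂ) := by
    funext y; exact pd_expc' c hφ y v
  rw [hrw]
  have hψ : ContDiff ℝ (⊤ : ℕ∞) (fun y => c * fderiv ℝ φ y v) :=
    contDiff_const.mul (contDiff_pd' hφ v)
  have hf : DifferentiableAt ℝ (fun y => ((c * fderiv ℝ φ y v : ℝ) : ℂ)) x :=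
    ((Complex.ofRealCLM.contDiff.comp hψ).differentiable (by simp) x)
  have hg : DifferentiableAt ℝ (fun y => (Real.exp (c * φ y) : ℂ)) x :=
    ((expc_contDiff' c hφ).differentiable (by simp) x)
  rw [pd_mul_apply' hf hg v, pd_expc' c hφ x v, pd_ofReal' ((hψ.differentiable (by simp)) x) v]
  have hc : fderiv ℝ (fun y => c * fderiv ℝ φ y v) x v
      = c * fderiv ℝ (fun y => fderiv ℝ φ y v) x v := by
    rw [fderiv_const_mul ((contDiff_pd' hφ v).differentiable (by simp) x)]; rfl
  rw [hc]
  push_cast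
  ring

lemma lap_expc' {φ : EuclideanSpace ℝ (Fin N) → ℝ} (c : ℝ) (hφ : ContDiff ℝ (⊤ : ℕ∞) φ)
    (x : EuclideanSpace ℝ (Fin N)) :
    lap (fun y => (Real.exp (c * φ y) : ℂ)) x
      = (↑(c * lapR φ x) + ↑(c ^ 2 * gradNormSq φ x)) * (Real.exp (c * φ x) : ℂ) := by
  unfold lap lapR gradNormSq pdR
  have h : ∀ i : Fin N,
      fderiv ℝ (fun y => fderiv ℝ (fun z => (Real.exp (c * φ z) : ℂ)) y
          (EuclideanSpace.single i 1)) x (EuclideanSpace.single i 1)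
        = (↑(c * fderiv ℝ (fun y => fderiv ℝ φ y (EuclideanSpace.single i 1)) x
              (EuclideanSpace.single i 1))
            + (↑(c * fderiv ℝ φ x (EuclideanSpace.single i 1)) : ℂ) ^ 2)
            * (Real.exp (c * φ x) : ℂ) :=
    fun i => pd2_expc' c hφ x _
  rw [Finset.sum_congr rfl fun i _ => h i, ← Finset.sum_mul]
  congr 1
  push_cast
  rw [Finset.sum_add_distrib, Finset.mul_sum, Finset.mul_sum]
  congr 1
  refine Finset.sum_congr rfl fun i _ => ?_
  ring

lemma lap_expc_mul' {φ : EuclideanSpace ℝ (Fin N) → ℝ} {u : EuclideanSpace ℝ (Fin N) → ℂ}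
    (c : ℝ) (hφ : ContDiff ℝ (⊤ : ℕ∞) φ) (hu : ContDiff ℝ (⊤ : ℕ∞) u) (x : EuclideanSpace ℝ (Fin N)) :
    lap (fun y => (Real.exp (c * φ y) : ℂ) * u y) x
      = (Real.exp (c * φ x) : ℂ)
        * (lap u x + 2 * (c : ℂ) * gradDot φ u x
            + ((c : ℂ) * ↑(lapR φ x) + (c : ℂ) ^ 2 * ↑(gradNormSq φ x)) * u x) := by
  rw [lap_mul' (expc_contDiff' c hφ) hu x, lap_expc' c hφ x]
  have hsum : (∑ i, pdC (fun y => (Real.exp (c * φ y) : ℂ)) i x * pdC u i x)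
      = ((c : ℂ) * (Real.exp (c * φ x) : ℂ)) * gradDot φ u x := by
    unfold pdC gradDot pdR pdC
    rw [Finset.mul_sum]
    refine Finset.sum_congr rfl fun i _ => ?_
    rw [pd_expc' c hφ x _]
    push_cast
    ring
  rw [hsum]
  push_cast
  ring

lemma conj_gradDot' {φ : EuclideanSpace ℝ (Fin N) → ℝ} {u : EuclideanSpace ℝ (Fin N) → ℂ}
    (x : EuclideanSpace ℝ (Fin N)) :
    gradDotBar φ u x = (starRingEnd ℂ) (gradDot φ u x) := by
  unfold gradDot gradDotBar
  rw [map_sum]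
  refine Finset.sum_congr rfl fun i _ => ?_
  rw [map_mul, Complex.conj_ofReal]

lemma key_algebra (l cr dr : ℝ) (a b v : ℂ) :
    (a + 2 * ((-l : ℝ) : ℂ) * b + (((-l : ℝ) : ℂ) * cr + ((-l : ℝ) : ℂ) ^ 2 * dr) * v)
        * (starRingEnd ℂ) (a + 2 * (l : ℂ) * b + ((l : ℂ) * cr + (l : ℂ) ^ 2 * dr) * v)
      = ((‖a‖ ^ 2 : ℝ) : ℂ) + (l : ℂ) ^ 4 * ((dr ^ 2 * ‖v‖ ^ 2 : ℝ) : ℂ)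
          - (l : ℂ) ^ 2 * ((cr ^ 2 * ‖v‖ ^ 2 : ℝ) : ℂ)
          + 4 * (l : ℂ) ^ 3 * Complex.I * ((((dr : ℂ) * (starRingEnd ℂ) b * v).im : ℝ) : ℂ)
          + 2 * (l : ℂ) ^ 2 * ((((dr : ℂ) * v * (starRingEnd ℂ) a).re : ℝ) : ℂ)
          - 4 * (l : ℂ) ^ 2 * ((((cr : ℂ) * (starRingEnd ℂ) b * v).re : ℝ) : ℂ)
          + 2 * (l : ℂ) * Complex.I * ((((cr : ℂ) * (starRingEnd ℂ) v * a).im : ℝ) : ℂ)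
          - 4 * (l : ℂ) ^ 2 * ((‖b‖ ^ 2 : ℝ) : ℂ)
          + 4 * (l : ℂ) * Complex.I * ((((starRingEnd ℂ) b * a).im : ℝ) : ℂ) := by
  apply Complex.ext <;>
    simp [Complex.mul_re, Complex.mul_im, Complex.add_re, Complex.add_im, Complex.sq_norm,
      Complex.normSq_apply, ← Complex.ofReal_pow] <;> ring

lemma pd_zero_outside' {F : Type*} [NormedAddCommGroup F] [NormedSpace ℝ F]
    {f : EuclideanSpace ℝ (Fin N) → F} {x : EuclideanSpace ℝ (Fin N)}
    (hx : x ∉ tsupport f) (v : EuclideanSpace ℝ (Fin N)) :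
    fderiv ℝ f x v = 0 := by
  have : fderiv ℝ f x = 0 := by
    have hev : f =ᶠ[nhds x] (fun _ => 0) := by
      filter_upwards [(isClosed_tsupport f).isOpen_compl.mem_nhds hx] with y hy
      exact image_eq_zero_of_notMem_tsupport hy
    rw [hev.fderiv_eq, fderiv_fun_const]
    rfl
  rw [this]; rfl

lemma pd2_zero_outside' {F : Type*} [NormedAddCommGroup F] [NormedSpace ℝ F]
    {f : EuclideanSpace ℝ (Fin N) → F} {x : EuclideanSpace ℝ (Fin N)}
    (hx : x ∉ tsupport f) (v w : EuclideanSpace ℝ (Fin N)) :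
    fderiv ℝ (fun y => fderiv ℝ f y v) x w = 0 := by
  have hev : (fun y => fderiv ℝ f y v) =ᶠ[nhds x] (fun _ => 0) := by
    filter_upwards [(isClosed_tsupport f).isOpen_compl.mem_nhds hx] with y hy
    exact pd_zero_outside' hy v
  rw [hev.fderiv_eq, fderiv_fun_const]
  rfl

lemma split9 {N : ℕ} (f1 f2 f3 f4 f5 f6 f7 f8 f9 : EuclideanSpace ℝ (Fin N) → ℂ)
    (h1 : Integrable f1) (h2 : Integrable f2) (h3 : Integrable f3) (h4 : Integrable f4)
    (h5 : Integrable f5) (h6 : Integrable f6) (h7 : Integrable f7) (h8 : Integrable f8)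
    (h9 : Integrable f9) :
    (∫ x, (f1 x + f2 x - f3 x + f4 x + f5 x - f6 x + f7 x - f8 x + f9 x))
      = (∫ x, f1 x) + (∫ x, f2 x) - (∫ x, f3 x) + (∫ x, f4 x) + (∫ x, f5 x)
        - (∫ x, f6 x) + (∫ x, f7 x) - (∫ x, f8 x) + (∫ x, f9 x) := by
  have h12 : Integrable (fun x => f1 x + f2 x) := h1.add h2
  have h13 : Integrable (fun x => f1 x + f2 x - f3 x) := h12.sub h3
  have h14 : Integrable (fun x => f1 x + f2 x - f3 x + f4 x) := h13.add h4
  have h15 : Integrable (fun x => f1 x + f2 x - f3 x + f4 x + f5 x) := h14.add h5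
  have h16 : Integrable (fun x => f1 x + f2 x - f3 x + f4 x + f5 x - f6 x) := h15.sub h6
  have h17 : Integrable (fun x => f1 x + f2 x - f3 x + f4 x + f5 x - f6 x + f7 x) := h16.add h7
  have h18 : Integrable (fun x => f1 x + f2 x - f3 x + f4 x + f5 x - f6 x + f7 x - f8 x) :=
    h17.sub h8
  rw [integral_add h18 h9, integral_sub h17 h8, integral_add h16 h7, integral_sub h15 h6,
    integral_add h14 h5, integral_add h13 h4, integral_sub h12 h3, integral_add h1 h2]

end Helpers

/-- **Expansion of the twisted form**: for smooth compactly supported `u : ℝ^N → ℂ`, a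
smooth `φ : ℝ^N → ℝ` with bounded first and second order partial derivatives, and `λ ∈ ℝ`:
`∫ Δ(e^{-λφ}u) conj(Δ(e^{λφ}u)) = ∫|Δu|² + λ⁴∫|∇φ|⁴|u|² - λ²∫|Δφ|²|u|²`
`+ 4λ³ i Im ∫ |∇φ|²(∇φ·∇ū)u + 2λ² Re ∫ |∇φ|² u Δū - 4λ² Re ∫ Δφ (∇φ·∇ū) u`
`+ 2λ i Im ∫ Δφ ū Δu - 4λ² ∫ |∇φ·∇u|² + 4λ i Im ∫ (∇φ·∇ū) Δu`. -/
theorem twisted_form_expansion (N : ℕ) (hN : 1 ≤ N) (l : ℝ)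
    (φ : EuclideanSpace ℝ (Fin N) → ℝ) (hφ : ContDiff ℝ (⊤ : ℕ∞) φ)
    (hφ1 : ∃ C : ℝ, ∀ x i, |pdR φ i x| ≤ C)
    (hφ2 : ∃ C : ℝ, ∀ x i j, |pdR (pdR φ i) j x| ≤ C)
    (u : EuclideanSpace ℝ (Fin N) → ℂ)
    (hu : ContDiff ℝ (⊤ : ℕ∞) u) (hsupp : HasCompactSupport u) :
    (∫ x, lap (fun y => (Real.exp (-(l * φ y)) : ℂ) * u y) x *
        (starRingEnd ℂ) (lap (fun y => (Real.exp (l * φ y) : ℂ) * u y) x)) =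
      ((∫ x, ‖lap u x‖ ^ 2 : ℝ) : ℂ)
        + (l : ℂ) ^ 4 * ((∫ x, (gradNormSq φ x) ^ 2 * ‖u x‖ ^ 2 : ℝ) : ℂ)
        - (l : ℂ) ^ 2 * ((∫ x, (lapR φ x) ^ 2 * ‖u x‖ ^ 2 : ℝ) : ℂ)
        + 4 * (l : ℂ) ^ 3 * Complex.I *
            (((∫ x, (gradNormSq φ x : ℂ) * gradDotBar φ u x * u x).im : ℝ) : ℂ)
        + 2 * (l : ℂ) ^ 2 *
            (((∫ x, (gradNormSq φ x : ℂ) * u x * (starRingEnd ℂ) (lap u x)).re : ℝ) : ℂ)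
        - 4 * (l : ℂ) ^ 2 *
            (((∫ x, (lapR φ x : ℂ) * gradDotBar φ u x * u x).re : ℝ) : ℂ)
        + 2 * (l : ℂ) * Complex.I *
            (((∫ x, (lapR φ x : ℂ) * (starRingEnd ℂ) (u x) * lap u x).im : ℝ) : ℂ)
        - 4 * (l : ℂ) ^ 2 * ((∫ x, ‖gradDot φ u x‖ ^ 2 : ℝ) : ℂ)
        + 4 * (l : ℂ) * Complex.I *
            (((∫ x, gradDotBar φ u x * lap u x).im : ℝ) : ℂ) := by
  classical
  -- continuity facts
  have hAc : Continuous (lap u) := by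
    unfold lap
    exact continuous_finset_sum _ fun i _ =>
      (contDiff_pd' (contDiff_pd' hu _) _).continuous
  have hBc : Continuous (gradDot φ u) := by
    unfold gradDot pdR pdC
    exact continuous_finset_sum _ fun i _ =>
      ((Complex.continuous_ofReal.comp (contDiff_pd' hφ _).continuous).mul
        (contDiff_pd' hu _).continuous)
  have hBbc : Continuous (gradDotBar φ u) := by
    unfold gradDotBar pdR pdC
    exact continuous_finset_sum _ fun i _ =>
      ((Complex.continuous_ofReal.comp (contDiff_pd' hφ _).continuous).mul
        (Complex.continuous_conj.comp (contDiff_pd' hu _).continuous))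
  have hcrc : Continuous (lapR φ) := by
    unfold lapR
    exact continuous_finset_sum _ fun i _ =>
      (contDiff_pd' (contDiff_pd' hφ _) _).continuous
  have hdrc : Continuous (gradNormSq φ) := by
    unfold gradNormSq pdR
    exact continuous_finset_sum _ fun i _ => ((contDiff_pd' hφ _).continuous.pow 2)
  have huc : Continuous u := hu.continuous
  -- vanishing outside the support of u
  have hA0 : ∀ x ∉ tsupport u, lap u x = 0 := by
    intro x hx
    unfold lap
    exact Finset.sum_eq_zero fun i _ => pd2_zero_outside' hx _ _
  have hB0 : ∀ x ∉ tsupport u, gradDot φ u x = 0 := by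
    intro x hx
    unfold gradDot pdC
    exact Finset.sum_eq_zero fun i _ => by rw [pd_zero_outside' hx]; ring
  have hBb0 : ∀ x ∉ tsupport u, gradDotBar φ u x = 0 := by
    intro x hx
    unfold gradDotBar pdC
    exact Finset.sum_eq_zero fun i _ => by rw [pd_zero_outside' hx]; simp
  have hu0 : ∀ x ∉ tsupport u, u x = 0 := fun x hx => image_eq_zero_of_notMem_tsupport hx
  -- integrability of all the pieces
  have int_of : ∀ (f : EuclideanSpace ℝ (Fin N) → ℂ), Continuous f →
      (∀ x ∉ tsupport u, f x = 0) → Integrable f := fun f hc h0 =>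
    hc.integrable_of_hasCompactSupport (HasCompactSupport.intro hsupp h0)
  have int_ofR : ∀ (f : EuclideanSpace ℝ (Fin N) → ℝ), Continuous f →
      (∀ x ∉ tsupport u, f x = 0) → Integrable f := fun f hc h0 =>
    hc.integrable_of_hasCompactSupport (HasCompactSupport.intro hsupp h0)
  have hg1 : Integrable (fun x => ‖lap u x‖ ^ 2) :=
    int_ofR _ ((hAc.norm).pow 2) (fun x hx => by rw [hA0 x hx]; simp)
  have hg2 : Integrable (fun x => gradNormSq φ x ^ 2 * ‖u x‖ ^ 2) :=
    int_ofR _ ((hdrc.pow 2).mul (huc.norm.pow 2)) (fun x hx => by rw [hu0 x hx]; simp)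
  have hg3 : Integrable (fun x => lapR φ x ^ 2 * ‖u x‖ ^ 2) :=
    int_ofR _ ((hcrc.pow 2).mul (huc.norm.pow 2)) (fun x hx => by rw [hu0 x hx]; simp)
  have hz4 : Integrable (fun x => (gradNormSq φ x : ℂ) * gradDotBar φ u x * u x) :=
    int_of _ (((Complex.continuous_ofReal.comp hdrc).mul hBbc).mul huc)
      (fun x hx => by rw [hu0 x hx]; simp)
  have hz5 : Integrable (fun x => (gradNormSq φ x : ℂ) * u x * (starRingEnd ℂ) (lap u x)) :=
    int_of _ (((Complex.continuous_ofReal.comp hdrc).mul huc).mul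
      (Complex.continuous_conj.comp hAc)) (fun x hx => by rw [hu0 x hx]; simp)
  have hz6 : Integrable (fun x => (lapR φ x : ℂ) * gradDotBar φ u x * u x) :=
    int_of _ (((Complex.continuous_ofReal.comp hcrc).mul hBbc).mul huc)
      (fun x hx => by rw [hu0 x hx]; simp)
  have hz7 : Integrable (fun x => (lapR φ x : ℂ) * (starRingEnd ℂ) (u x) * lap u x) :=
    int_of _ (((Complex.continuous_ofReal.comp hcrc).mul
      (Complex.continuous_conj.comp huc)).mul hAc) (fun x hx => by rw [hA0 x hx]; simp)
  have hg8 : Integrable (fun x => ‖gradDot φ u x‖ ^ 2) :=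
    int_ofR _ (hBc.norm.pow 2) (fun x hx => by rw [hB0 x hx]; simp)
  have hz9 : Integrable (fun x => gradDotBar φ u x * lap u x) :=
    int_of _ (hBbc.mul hAc) (fun x hx => by rw [hA0 x hx]; simp)
  -- the pointwise identity
  have hpt : (fun x => lap (fun y => (Real.exp (-(l * φ y)) : ℂ) * u y) x *
        (starRingEnd ℂ) (lap (fun y => (Real.exp (l * φ y) : ℂ) * u y) x))
      = fun x =>
        ((‖lap u x‖ ^ 2 : ℝ) : ℂ)
        + (l : ℂ) ^ 4 * ((gradNormSq φ x ^ 2 * ‖u x‖ ^ 2 : ℝ) : ℂ)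
        - (l : ℂ) ^ 2 * ((lapR φ x ^ 2 * ‖u x‖ ^ 2 : ℝ) : ℂ)
        + 4 * (l : ℂ) ^ 3 * Complex.I *
            ((((gradNormSq φ x : ℂ) * gradDotBar φ u x * u x).im : ℝ) : ℂ)
        + 2 * (l : ℂ) ^ 2 *
            ((((gradNormSq φ x : ℂ) * u x * (starRingEnd ℂ) (lap u x)).re : ℝ) : ℂ)
        - 4 * (l : ℂ) ^ 2 *
            ((((lapR φ x : ℂ) * gradDotBar φ u x * u x).re : ℝ) : ℂ)
        + 2 * (l : ℂ) * Complex.I *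
            ((((lapR φ x : ℂ) * (starRingEnd ℂ) (u x) * lap u x).im : ℝ) : ℂ)
        - 4 * (l : ℂ) ^ 2 * ((‖gradDot φ u x‖ ^ 2 : ℝ) : ℂ)
        + 4 * (l : ℂ) * Complex.I *
            (((gradDotBar φ u x * lap u x).im : ℝ) : ℂ) := by
    funext x
    have hmfun : (fun y => (Real.exp (-(l * φ y)) : ℂ) * u y)
        = fun y => (Real.exp ((-l) * φ y) : ℂ) * u y := by
      funext y; rw [neg_mul]
    rw [hmfun, lap_expc_mul' (-l) hφ hu x, lap_expc_mul' l hφ hu x, map_mul,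
      Complex.conj_ofReal, mul_mul_mul_comm]
    have he : ((Real.exp (-l * φ x) : ℝ) : ℂ) * ((Real.exp (l * φ x) : ℝ) : ℂ) = 1 := by
      rw [← Complex.ofReal_mul, ← Real.exp_add]
      norm_num
    rw [he, one_mul]
    have hbar : gradDotBar φ u x = (starRingEnd ℂ) (gradDot φ u x) := conj_gradDot' x
    rw [hbar]
    exact key_algebra l (lapR φ x) (gradNormSq φ x) (lap u x) (gradDot φ u x) (u x)
  rw [hpt]
  -- integrability of the nine summands
  have hf1 : Integrable (fun x => ((‖lap u x‖ ^ 2 : ℝ) : ℂ)) := hg1.ofReal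
  have hf2 : Integrable (fun x =>
      (l : ℂ) ^ 4 * ((gradNormSq φ x ^ 2 * ‖u x‖ ^ 2 : ℝ) : ℂ)) := hg2.ofReal.const_mul _
  have hf3 : Integrable (fun x =>
      (l : ℂ) ^ 2 * ((lapR φ x ^ 2 * ‖u x‖ ^ 2 : ℝ) : ℂ)) := hg3.ofReal.const_mul _
  have him4 : Integrable (fun x =>
      (((gradNormSq φ x : ℂ) * gradDotBar φ u x * u x).im : ℝ)) := hz4.im
  have hf4 : Integrable (fun x => 4 * (l : ℂ) ^ 3 * Complex.I *
      ((((gradNormSq φ x : ℂ) * gradDotBar φ u x * u x).im : ℝ) : ℂ)) :=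
    him4.ofReal.const_mul _
  have hf5 : Integrable (fun x => 2 * (l : ℂ) ^ 2 *
      ((((gradNormSq φ x : ℂ) * u x * (starRingEnd ℂ) (lap u x)).re : ℝ) : ℂ)) :=
    hz5.re.ofReal.const_mul _
  have hf6 : Integrable (fun x => 4 * (l : ℂ) ^ 2 *
      ((((lapR φ x : ℂ) * gradDotBar φ u x * u x).re : ℝ) : ℂ)) :=
    hz6.re.ofReal.const_mul _
  have hf7 : Integrable (fun x => 2 * (l : ℂ) * Complex.I *
      ((((lapR φ x : ℂ) * (starRingEnd ℂ) (u x) * lap u x).im : ℝ) : ℂ)) :=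
    hz7.im.ofReal.const_mul _
  have hf8 : Integrable (fun x => 4 * (l : ℂ) ^ 2 * ((‖gradDot φ u x‖ ^ 2 : ℝ) : ℂ)) :=
    hg8.ofReal.const_mul _
  have hf9 : Integrable (fun x => 4 * (l : ℂ) * Complex.I *
      (((gradDotBar φ u x * lap u x).im : ℝ) : ℂ)) := hz9.im.ofReal.const_mul _
  -- split the integral
  have hsplit := split9 _ _ _ _ _ _ _ _ _ hf1 hf2 hf3 hf4 hf5 hf6 hf7 hf8 hf9
  rw [hsplit]
  -- evaluate each piece
  have e1 : (∫ x, ((‖lap u x‖ ^ 2 : ℝ) : ℂ)) = ((∫ x, ‖lap u x‖ ^ 2 : ℝ) : ℂ) :=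
    integral_ofReal
  have cmul : ∀ (c : ℂ) (g : EuclideanSpace ℝ (Fin N) → ℂ),
      (∫ x, c * g x) = c * ∫ x, g x := fun c g => by
    simpa [smul_eq_mul] using integral_smul c g
  have e2 : (∫ x, (l : ℂ) ^ 4 * ((gradNormSq φ x ^ 2 * ‖u x‖ ^ 2 : ℝ) : ℂ))
      = (l : ℂ) ^ 4 * ((∫ x, gradNormSq φ x ^ 2 * ‖u x‖ ^ 2 : ℝ) : ℂ) :=
    (cmul _ _).trans (congrArg (fun t => (l : ℂ) ^ 4 * t) integral_ofReal)
  have e3 : (∫ x, (l : ℂ) ^ 2 * ((lapR φ x ^ 2 * ‖u x‖ ^ 2 : ℝ) : ℂ))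
      = (l : ℂ) ^ 2 * ((∫ x, lapR φ x ^ 2 * ‖u x‖ ^ 2 : ℝ) : ℂ) :=
    (cmul _ _).trans (congrArg (fun t => (l : ℂ) ^ 2 * t) integral_ofReal)
  have e4 : (∫ x, 4 * (l : ℂ) ^ 3 * Complex.I *
        ((((gradNormSq φ x : ℂ) * gradDotBar φ u x * u x).im : ℝ) : ℂ))
      = 4 * (l : ℂ) ^ 3 * Complex.I *
        (((∫ x, (gradNormSq φ x : ℂ) * gradDotBar φ u x * u x).im : ℝ) : ℂ) :=
    (cmul _ _).trans (congrArg (fun t => 4 * (l : ℂ) ^ 3 * Complex.I * t)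
      (integral_ofReal.trans (congrArg Complex.ofReal (integral_im hz4))))
  have e5 : (∫ x, 2 * (l : ℂ) ^ 2 *
        ((((gradNormSq φ x : ℂ) * u x * (starRingEnd ℂ) (lap u x)).re : ℝ) : ℂ))
      = 2 * (l : ℂ) ^ 2 *
        (((∫ x, (gradNormSq φ x : ℂ) * u x * (starRingEnd ℂ) (lap u x)).re : ℝ) : ℂ) :=
    (cmul _ _).trans (congrArg (fun t => 2 * (l : ℂ) ^ 2 * t)
      (integral_ofReal.trans (congrArg Complex.ofReal (integral_re hz5))))
  have e6 : (∫ x, 4 * (l : ℂ) ^ 2 *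
        ((((lapR φ x : ℂ) * gradDotBar φ u x * u x).re : ℝ) : ℂ))
      = 4 * (l : ℂ) ^ 2 *
        (((∫ x, (lapR φ x : ℂ) * gradDotBar φ u x * u x).re : ℝ) : ℂ) :=
    (cmul _ _).trans (congrArg (fun t => 4 * (l : ℂ) ^ 2 * t)
      (integral_ofReal.trans (congrArg Complex.ofReal (integral_re hz6))))
  have e7 : (∫ x, 2 * (l : ℂ) * Complex.I *
        ((((lapR φ x : ℂ) * (starRingEnd ℂ) (u x) * lap u x).im : ℝ) : ℂ))
      = 2 * (l : ℂ) * Complex.I *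
        (((∫ x, (lapR φ x : ℂ) * (starRingEnd ℂ) (u x) * lap u x).im : ℝ) : ℂ) :=
    (cmul _ _).trans (congrArg (fun t => 2 * (l : ℂ) * Complex.I * t)
      (integral_ofReal.trans (congrArg Complex.ofReal (integral_im hz7))))
  have e8 : (∫ x, 4 * (l : ℂ) ^ 2 * ((‖gradDot φ u x‖ ^ 2 : ℝ) : ℂ))
      = 4 * (l : ℂ) ^ 2 * ((∫ x, ‖gradDot φ u x‖ ^ 2 : ℝ) : ℂ) :=
    (cmul _ _).trans (congrArg (fun t => 4 * (l : ℂ) ^ 2 * t) integral_ofReal)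
  have e9 : (∫ x, 4 * (l : ℂ) * Complex.I *
        (((gradDotBar φ u x * lap u x).im : ℝ) : ℂ))
      = 4 * (l : ℂ) * Complex.I *
        (((∫ x, gradDotBar φ u x * lap u x).im : ℝ) : ℂ) :=
    (cmul _ _).trans (congrArg (fun t => 4 * (l : ℂ) * Complex.I * t)
      (integral_ofReal.trans (congrArg Complex.ofReal (integral_im hz9))))
  rw [e1, e2, e3, e4, e5, e6, e7, e8, e9]
end

section
/- (Lemma 3.1 together with Remark 3.2(a).) Let N ≥ 1 be an integer and let E and F be nonempty convex compact subsets of ℝ^N (not necessarily disjoint). Then d_e(E,F) ≤ d(E,F) ≤ N^{1/2} d_e(E,F). -/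
open MeasureTheory InnerProductSpace
set_option maxHeartbeats 1000000

/-- The class `ℰ` of bounded smooth real functions on `ℝ^N` whose partial derivatives of
order 1 and 2 are bounded by 1 in absolute value. -/
def memE {N : ℕ} (φ : EuclideanSpace ℝ (Fin N) → ℝ) : Prop :=
  ContDiff ℝ (⊤ : ℕ∞) φ ∧ (∃ C : ℝ, ∀ x, |φ x| ≤ C) ∧
    (∀ x i, |fderiv ℝ φ x (EuclideanSpace.single i 1)| ≤ 1) ∧
    (∀ x i j,
      |fderiv ℝ (fun y => fderiv ℝ φ y (EuclideanSpace.single i 1)) x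
        (EuclideanSpace.single j 1)| ≤ 1)

/-- The Davies distance `d(E,F) = sup_{φ ∈ ℰ} inf {φ(x) - φ(y) : x ∈ E, y ∈ F}`. -/
noncomputable def daviesDist {N : ℕ} (E F : Set (EuclideanSpace ℝ (Fin N))) : ℝ :=
  ⨆ φ : {φ : EuclideanSpace ℝ (Fin N) → ℝ // memE φ},
    ⨅ p : E × F, (φ.1 p.1 - φ.1 p.2)

/-- The Euclidean distance `d_e(E,F) = inf {|x - y| : x ∈ E, y ∈ F}`. -/
noncomputable def euclDist {N : ℕ} (E F : Set (EuclideanSpace ℝ (Fin N))) : ℝ :=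
  ⨅ p : E × F, dist (p.1 : EuclideanSpace ℝ (Fin N)) (p.2 : EuclideanSpace ℝ (Fin N))

/-! ### Auxiliary one-dimensional profile function -/

noncomputable def psi (a t : ℝ) : ℝ := a⁻¹ * Real.arctan (a * t)

noncomputable def psid (a t : ℝ) : ℝ := (1 + (a*t)^2)⁻¹

lemma psi_contDiff (a : ℝ) : ContDiff ℝ (⊤ : ℕ∞) (psi a) :=
  contDiff_const.mul (Real.contDiff_arctan.comp (contDiff_const.mul contDiff_id))

lemma one_add_sq_pos (x : ℝ) : (0:ℝ) < 1 + x^2 := by positivity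

lemma psid_pos (a t : ℝ) : 0 < psid a t := by
  rw [psid]; positivity

lemma psid_le_one (a t : ℝ) : psid a t ≤ 1 := by
  rw [psid, inv_le_one_iff₀]
  right; nlinarith [sq_nonneg (a*t)]

lemma psi_hasDerivAt {a : ℝ} (ha : a ≠ 0) (t : ℝ) : HasDerivAt (psi a) (psid a t) t := by
  have h1 : HasDerivAt (fun t : ℝ => a * t) a t := by
    simpa using (hasDerivAt_id t).const_mul a
  have h2 := (Real.hasDerivAt_arctan (a*t)).comp t h1
  have h3 := h2.const_mul a⁻¹
  convert h3 using 1
  any_goals rfl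
  rw [psid]
  field_simp

lemma psi_deriv {a : ℝ} (ha : a ≠ 0) : deriv (psi a) = psid a :=
  funext fun t => (psi_hasDerivAt ha t).deriv

lemma psid_hasDerivAt (a t : ℝ) :
    HasDerivAt (psid a) (-(2*a^2*t) * (psid a t)^2) t := by
  have h1 : HasDerivAt (fun t : ℝ => 1 + (a*t)^2) (2*a^2*t) t := by
    have : HasDerivAt (fun t : ℝ => a * t) a t := by simpa using (hasDerivAt_id t).const_mul a
    have h0 := (this.pow 2).const_add 1
    convert h0 using 1
    any_goals rfl
    ring
  have h2 := h1.inv (by positivity : (1 + (a*t)^2) ≠ 0)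
  convert h2 using 1
  any_goals rfl
  rw [psid]
  field_simp

lemma psid_deriv_abs_le {a : ℝ} (ha0 : 0 < a) (ha1 : a ≤ 1) (t : ℝ) :
    |(-(2*a^2*t) * (psid a t)^2)| ≤ 1 := by
  have hp := psid_pos a t
  have hp1 := psid_le_one a t
  have key : 2*a^2*|t| * (psid a t) ≤ a := by
    rw [psid, mul_inv_le_iff₀ (one_add_sq_pos (a*t))]
    have h2 : (a*|t|) ^2 = (a*t)^2 := by
      rw [mul_pow, mul_pow, sq_abs]
    nlinarith [sq_nonneg (1 - a*|t|), abs_nonneg t]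
  have habs : |(-(2*a^2*t) * (psid a t)^2)| = 2*a^2*|t| * (psid a t)^2 := by
    rw [abs_mul, abs_neg, abs_of_nonneg (pow_nonneg hp.le 2), abs_mul,
      abs_of_nonneg (by positivity : (0:ℝ) ≤ 2*a^2)]
  rw [habs]
  nlinarith [abs_nonneg t, mul_le_mul_of_nonneg_left hp1 (by positivity : (0:ℝ) ≤ 2*a^2*|t| * psid a t)]

lemma psi_abs_le {a : ℝ} (ha0 : 0 < a) (t : ℝ) : |psi a t| ≤ a⁻¹ * (Real.pi / 2) := by
  rw [psi, abs_mul, abs_of_nonneg (inv_nonneg.mpr ha0.le)]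
  apply mul_le_mul_of_nonneg_left _ (inv_nonneg.mpr ha0.le)
  rw [abs_le]
  exact ⟨(Real.neg_pi_div_two_lt_arctan _).le, (Real.arctan_lt_pi_div_two _).le⟩

lemma psi_incr {a R : ℝ} (ha0 : 0 < a) {s t : ℝ} (hs : |s| ≤ R) (ht : |t| ≤ R)
    (hst : s ≤ t) : (1 - a^2*R^2) * (t - s) ≤ psi a t - psi a s := by
  have hder : ∀ x ∈ interior (Set.Icc (-R) R), (1 - a^2*R^2) ≤ deriv (psi a) x := by
    intro x hx
    rw [psi_deriv ha0.ne']
    have hxR : |x| ≤ R := by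
      rw [interior_Icc] at hx
      rw [abs_le]; exact ⟨hx.1.le, hx.2.le⟩
    rw [psid]
    have h1 : (a*x)^2 ≤ a^2*R^2 := by
      have := sq_abs x ▸ pow_le_pow_left₀ (abs_nonneg x) hxR 2
      calc (a*x)^2 = a^2 * x^2 := by ring
        _ ≤ a^2*R^2 := by nlinarith [sq_nonneg a]
    have h2 : (1 - (a*x)^2) * (1 + (a*x)^2) ≤ 1 := by nlinarith [sq_nonneg ((a*x)^2)]
    calc (1 - a^2*R^2) ≤ 1 - (a*x)^2 := by linarith
      _ ≤ (1 + (a*x)^2)⁻¹ := by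
          have h3 : (0:ℝ) < 1 + (a*x)^2 := one_add_sq_pos _
          have h4 : (1+(a*x)^2) * (1+(a*x)^2)⁻¹ = 1 := mul_inv_cancel₀ h3.ne'
          nlinarith [inv_nonneg.mpr h3.le]
  have := Convex.mul_sub_le_image_sub_of_le_deriv (convex_Icc (-R) R)
    (psi_contDiff a).continuous.continuousOn
    (fun x _ => (psi_hasDerivAt ha0.ne' x).differentiableAt.differentiableWithinAt)
    hder s ?_ t ?_ hst
  · exact this
  · rw [Set.mem_Icc]; exact ⟨(abs_le.mp hs).1, (abs_le.mp hs).2⟩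
  · rw [Set.mem_Icc]; exact ⟨(abs_le.mp ht).1, (abs_le.mp ht).2⟩

/-! ### Euclidean space helpers -/

lemma eucl_eq_sum_single {N : ℕ} (v : EuclideanSpace ℝ (Fin N)) :
    v = ∑ i, (v i) • (EuclideanSpace.single i (1:ℝ) : EuclideanSpace ℝ (Fin N)) := by
  have h := (EuclideanSpace.basisFun (Fin N) ℝ).sum_repr v
  simp only [EuclideanSpace.basisFun_repr, EuclideanSpace.basisFun_apply] at h
  exact h.symm

lemma sum_abs_le_sqrt_mul_norm {N : ℕ} (v : EuclideanSpace ℝ (Fin N)) :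
    ∑ i, |v i| ≤ Real.sqrt N * ‖v‖ := by
  have hnorm : ‖v‖ = Real.sqrt (∑ i, |v i|^2) := by
    rw [EuclideanSpace.norm_eq]
    simp [Real.norm_eq_abs]
  have h1 : (∑ i, |v i|)^2 ≤ (N : ℝ) * ∑ i, |v i|^2 := by
    simpa using sq_sum_le_card_mul_sum_sq (s := Finset.univ) (f := fun i => |v i|)
  calc ∑ i, |v i| = Real.sqrt ((∑ i, |v i|)^2) := by
        rw [Real.sqrt_sq (Finset.sum_nonneg fun i _ => abs_nonneg _)]
    _ ≤ Real.sqrt ((N : ℝ) * ∑ i, |v i|^2) := Real.sqrt_le_sqrt h1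
    _ = Real.sqrt N * ‖v‖ := by
        rw [Real.sqrt_mul (Nat.cast_nonneg N), hnorm]

lemma memE_lipschitz {N : ℕ} {φ : EuclideanSpace ℝ (Fin N) → ℝ} (hφ : memE φ)
    (x y : EuclideanSpace ℝ (Fin N)) : φ x - φ y ≤ Real.sqrt N * ‖x - y‖ := by
  obtain ⟨hsm, _, hd1, _⟩ := hφ
  have hdiff : ∀ z, DifferentiableAt ℝ φ z := fun z =>
    (hsm.differentiable (by simp)).differentiableAt
  have hb : ∀ z, ‖fderiv ℝ φ z‖ ≤ Real.sqrt N := by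
    intro z
    refine ContinuousLinearMap.opNorm_le_bound _ (Real.sqrt_nonneg N) fun v => ?_
    have hv : fderiv ℝ φ z v = ∑ i, v i * fderiv ℝ φ z (EuclideanSpace.single i 1) := by
      conv_lhs => rw [eucl_eq_sum_single v]
      rw [map_sum]
      exact Finset.sum_congr rfl fun i _ => by rw [(fderiv ℝ φ z).map_smul, smul_eq_mul]
    rw [Real.norm_eq_abs, hv]
    calc |∑ i, v i * fderiv ℝ φ z (EuclideanSpace.single i 1)|
        ≤ ∑ i, |v i * fderiv ℝ φ z (EuclideanSpace.single i 1)| :=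
          Finset.abs_sum_le_sum_abs _ _
      _ ≤ ∑ i, |v i| := by
          refine Finset.sum_le_sum fun i _ => ?_
          rw [abs_mul]
          calc |v i| * |fderiv ℝ φ z (EuclideanSpace.single i 1)| ≤ |v i| * 1 :=
                mul_le_mul_of_nonneg_left (hd1 z i) (abs_nonneg _)
            _ = |v i| := mul_one _
      _ ≤ Real.sqrt N * ‖v‖ := sum_abs_le_sqrt_mul_norm v
  have key := convex_univ.norm_image_sub_le_of_norm_fderiv_le
    (fun z _ => hdiff z) (fun z _ => hb z) (Set.mem_univ y) (Set.mem_univ x)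
  calc φ x - φ y ≤ |φ x - φ y| := le_abs_self _
    _ = ‖φ x - φ y‖ := (Real.norm_eq_abs _).symm
    _ ≤ Real.sqrt N * ‖x - y‖ := key

lemma memE_zero {N : ℕ} : memE (fun _ : EuclideanSpace ℝ (Fin N) => (0:ℝ)) := by
  refine ⟨contDiff_const, ⟨0, fun x => by simp⟩, ?_, ?_⟩
  · intro x i
    rw [fderiv_fun_const]
    simp
  · intro x i j
    simp only [fderiv_fun_const]
    simp

/-- **Lemma 3.1 and Remark 3.2(a)**: for nonempty convex compact subsets `E, F` of `ℝ^N`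
(not necessarily disjoint), `d_e(E,F) ≤ d(E,F) ≤ √N d_e(E,F)`. -/
theorem davies_dist_equiv_eucl_dist (N : ℕ) (hN : 1 ≤ N)
    (E F : Set (EuclideanSpace ℝ (Fin N)))
    (hEne : E.Nonempty) (hFne : F.Nonempty)
    (hEconv : Convex ℝ E) (hFconv : Convex ℝ F)
    (hEcomp : IsCompact E) (hFcomp : IsCompact F) :
    euclDist E F ≤ daviesDist E F ∧
      daviesDist E F ≤ Real.sqrt N * euclDist E F := by
  classical
  haveI hprodne : Nonempty (↥E × ↥F) :=
    ⟨⟨⟨hEne.choose, hEne.choose_spec⟩, ⟨hFne.choose, hFne.choose_spec⟩⟩⟩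
  haveI hEmemne : Nonempty {φ : EuclideanSpace ℝ (Fin N) → ℝ // memE φ} :=
    ⟨⟨fun _ => 0, memE_zero⟩⟩
  -- a minimizing pair
  obtain ⟨z₀, hz₀, hminz⟩ := (hEcomp.prod hFcomp).exists_isMinOn (hEne.prod hFne)
    (continuous_dist.continuousOn :
      ContinuousOn (fun p : _ × _ => dist p.1 p.2) (E ×ˢ F))
  obtain ⟨x₀, y₀⟩ := z₀
  have hx₀ : x₀ ∈ E := hz₀.1
  have hy₀ : y₀ ∈ F := hz₀.2
  set δ := dist x₀ y₀ with hδdef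
  haveI : Nonempty ↥E := ⟨⟨x₀, hx₀⟩⟩
  haveI : Nonempty ↥F := ⟨⟨y₀, hy₀⟩⟩
  have hmin : ∀ x ∈ E, ∀ y ∈ F, δ ≤ dist x y := fun x hx y hy =>
    isMinOn_iff.mp hminz (x, y) (Set.mk_mem_prod hx hy)
  have hδ0 : 0 ≤ δ := dist_nonneg
  have hδeucl : euclDist E F = δ := by
    refine le_antisymm ?_ ?_
    · exact ciInf_le ⟨0, by rintro r ⟨p, rfl⟩; exact dist_nonneg⟩
        (⟨⟨x₀, hx₀⟩, ⟨y₀, hy₀⟩⟩ : ↥E × ↥F)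
    · exact le_ciInf fun p => hmin p.1.1 p.1.2 p.2.1 p.2.2
  -- bounded below property for each φ
  have hbddBelow : ∀ φ : {φ : EuclideanSpace ℝ (Fin N) → ℝ // memE φ},
      BddBelow (Set.range fun p : ↥E × ↥F => (φ.1 p.1 - φ.1 p.2)) := by
    intro φ
    obtain ⟨C, hC⟩ := φ.2.2.1
    refine ⟨-(C + C), ?_⟩
    rintro r ⟨p, rfl⟩
    have h1 := abs_le.mp (hC p.1.1)
    have h2 := abs_le.mp (hC p.2.1)
    simp only
    linarith
  -- each infimum is at most √N δ
  have hinf_le : ∀ φ : {φ : EuclideanSpace ℝ (Fin N) → ℝ // memE φ},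
      (⨅ p : ↥E × ↥F, (φ.1 p.1 - φ.1 p.2)) ≤ Real.sqrt N * δ := by
    intro φ
    calc (⨅ p : ↥E × ↥F, (φ.1 p.1 - φ.1 p.2))
        ≤ φ.1 x₀ - φ.1 y₀ := ciInf_le (hbddBelow φ) (⟨⟨x₀, hx₀⟩, ⟨y₀, hy₀⟩⟩ : ↥E × ↥F)
      _ ≤ Real.sqrt N * ‖x₀ - y₀‖ := memE_lipschitz φ.2 x₀ y₀
      _ = Real.sqrt N * δ := by rw [hδdef, dist_eq_norm]
  have hBddAbove : BddAbove (Set.range fun φ : {φ : EuclideanSpace ℝ (Fin N) → ℝ // memE φ} =>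
      ⨅ p : ↥E × ↥F, (φ.1 p.1 - φ.1 p.2)) := by
    refine ⟨Real.sqrt N * δ, ?_⟩
    rintro r ⟨φ, rfl⟩
    exact hinf_le φ
  constructor
  · -- euclDist ≤ daviesDist
    rw [hδeucl]
    rcases eq_or_lt_of_le hδ0 with h0 | hδpos
    · -- δ = 0 : use φ = 0
      rw [← h0]
      have h := le_ciSup hBddAbove (⟨fun _ => 0, memE_zero⟩ :
        {φ : EuclideanSpace ℝ (Fin N) → ℝ // memE φ})
      rw [daviesDist]
      refine le_trans ?_ h
      simp
    · -- δ > 0 : separation argument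
      -- the unit vector
      set u : EuclideanSpace ℝ (Fin N) := δ⁻¹ • (x₀ - y₀) with hudef
      have hnorm₀ : ‖x₀ - y₀‖ = δ := (dist_eq_norm x₀ y₀).symm
      have hu : ‖u‖ = 1 := by
        rw [hudef, norm_smul, hnorm₀, Real.norm_eq_abs, abs_of_pos (by positivity),
          inv_mul_cancel₀ hδpos.ne']
      -- obtuse angle conditions
      have hE1 : ∀ w ∈ E, ⟪y₀ - x₀, w - x₀⟫_ℝ ≤ 0 := by
        refine (norm_eq_iInf_iff_real_inner_le_zero hEconv hx₀).mp ?_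
        refine le_antisymm (le_ciInf fun w => ?_)
          (ciInf_le ⟨0, by rintro r ⟨p, rfl⟩; exact norm_nonneg _⟩ (⟨x₀, hx₀⟩ : ↥E))
        have hww := hmin w.1 w.2 y₀ hy₀
        rw [dist_comm] at hww
        calc ‖y₀ - x₀‖ = dist y₀ x₀ := (dist_eq_norm _ _).symm
          _ = δ := by rw [hδdef]; exact dist_comm y₀ x₀
          _ ≤ dist y₀ w.1 := hww
          _ = ‖y₀ - w.1‖ := dist_eq_norm _ _
      have hF1 : ∀ w ∈ F, ⟪x₀ - y₀, w - y₀⟫_ℝ ≤ 0 := by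
        refine (norm_eq_iInf_iff_real_inner_le_zero hFconv hy₀).mp ?_
        refine le_antisymm (le_ciInf fun w => ?_)
          (ciInf_le ⟨0, by rintro r ⟨p, rfl⟩; exact norm_nonneg _⟩ (⟨y₀, hy₀⟩ : ↥F))
        have hww := hmin x₀ hx₀ w.1 w.2
        calc ‖x₀ - y₀‖ = δ := by rw [hδdef, dist_eq_norm]
          _ ≤ dist x₀ w.1 := hww
          _ = ‖x₀ - w.1‖ := dist_eq_norm _ _
      have hsep : ∀ x ∈ E, ∀ y ∈ F, δ ≤ ⟪u, x - y⟫_ℝ := by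
        intro x hx y hy
        have h1 : 0 ≤ ⟪x₀ - y₀, x - x₀⟫_ℝ := by
          have h := hE1 x hx
          have heq : ⟪y₀ - x₀, x - x₀⟫_ℝ = -⟪x₀ - y₀, x - x₀⟫_ℝ := by
            rw [← inner_neg_left]
            congr 1
            abel
          linarith [heq ▸ h]
        have h2 : 0 ≤ ⟪x₀ - y₀, y₀ - y⟫_ℝ := by
          have h := hF1 y hy
          have heq : ⟪x₀ - y₀, y - y₀⟫_ℝ = -⟪x₀ - y₀, y₀ - y⟫_ℝ := by
            rw [← inner_neg_right]
            congr 1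
            abel
          linarith [heq ▸ h]
        have h3 : ⟪x₀ - y₀, x₀ - y₀⟫_ℝ = δ^2 := by
          rw [real_inner_self_eq_norm_sq, hnorm₀]
        have hdecomp : (x - y) = (x - x₀) + (x₀ - y₀) + (y₀ - y) := by abel
        have key : δ^2 ≤ ⟪x₀ - y₀, x - y⟫_ℝ := by
          rw [hdecomp, inner_add_right, inner_add_right]
          linarith
        calc δ = δ⁻¹ * δ^2 := by field_simp [hδpos.ne']
          _ ≤ δ⁻¹ * ⟪x₀ - y₀, x - y⟫_ℝ :=
            mul_le_mul_of_nonneg_left key (inv_nonneg.mpr hδpos.le)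
          _ = ⟪u, x - y⟫_ℝ := (real_inner_smul_left _ _ _).symm
      -- a bound R on the inner products
      obtain ⟨R₀, hR₀⟩ := (hEcomp.union hFcomp).isBounded.subset_closedBall 0
      set R := max R₀ 1 with hRdef
      have hR1 : (1:ℝ) ≤ R := le_max_right _ _
      have hRpos : (0:ℝ) < R := lt_of_lt_of_le one_pos hR1
      have hbound : ∀ z ∈ E ∪ F, |⟪u, z⟫_ℝ| ≤ R := by
        intro z hz
        calc |⟪u, z⟫_ℝ| ≤ ‖u‖ * ‖z‖ := abs_real_inner_le_norm u z
          _ = ‖z‖ := by rw [hu, one_mul]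
          _ ≤ R₀ := by
              have := hR₀ hz
              rwa [Metric.mem_closedBall, dist_zero_right] at this
          _ ≤ R := le_max_left _ _
      -- ε-argument
      refine le_of_forall_pos_le_add fun ε hε => ?_
      set a := min R⁻¹ (Real.sqrt (ε / (δ * R^2))) with hadef
      have ha0 : 0 < a := lt_min (by positivity) (Real.sqrt_pos.mpr (by positivity))
      have ha1 : a ≤ 1 := (min_le_left _ _).trans (by
        rw [inv_le_one_iff₀]; right; exact hR1)
      have haR : a^2 * R^2 ≤ 1 := by
        have h := min_le_left R⁻¹ (Real.sqrt (ε / (δ * R^2)))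
        have h2 : a * R ≤ 1 := by
          calc a * R ≤ R⁻¹ * R := mul_le_mul_of_nonneg_right h hRpos.le
            _ = 1 := inv_mul_cancel₀ hRpos.ne'
        calc a^2 * R^2 = (a*R)^2 := by ring
          _ ≤ 1^2 := pow_le_pow_left₀ (by positivity) h2 2
          _ = 1 := one_pow 2
      have haε : a^2 * R^2 * δ ≤ ε := by
        have h := min_le_right R⁻¹ (Real.sqrt (ε / (δ * R^2)))
        have h2 : a^2 ≤ ε / (δ * R^2) := by
          calc a^2 ≤ (Real.sqrt (ε / (δ * R^2)))^2 := pow_le_pow_left₀ ha0.le h 2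
            _ = ε / (δ * R^2) := Real.sq_sqrt (by positivity)
        calc a^2 * R^2 * δ ≤ (ε / (δ * R^2)) * R^2 * δ := by
              have hRδ : (0:ℝ) ≤ R^2 * δ := by positivity
              nlinarith [sq_nonneg R, hδpos.le]
          _ = ε := by field_simp
      -- the test function
      set φ : EuclideanSpace ℝ (Fin N) → ℝ := fun x => psi a (⟪u, x⟫_ℝ) with hφdef
      have hinner_single : ∀ i, ⟪u, (EuclideanSpace.single i (1:ℝ) :
          EuclideanSpace ℝ (Fin N))⟫_ℝ = u i := by
        intro i
        rw [EuclideanSpace.inner_single_right]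
        simp
      have hui : ∀ i, |u i| ≤ 1 := by
        intro i
        have h1 : |u i|^2 ≤ ∑ j, ‖u j‖^2 := by
          rw [← Real.norm_eq_abs]
          exact Finset.single_le_sum (f := fun j => ‖u j‖^2)
            (fun j _ => by positivity) (Finset.mem_univ i)
        have h2 : Real.sqrt (|u i|^2) ≤ Real.sqrt (∑ j, ‖u j‖^2) := Real.sqrt_le_sqrt h1
        rw [Real.sqrt_sq (abs_nonneg _), ← EuclideanSpace.norm_eq, hu] at h2
        exact h2
      have hfderphi : ∀ x, HasFDerivAt φ
          ((psid a (⟪u, x⟫_ℝ)) • (innerSL ℝ u)) x := by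
        intro x
        exact (psi_hasDerivAt ha0.ne' (⟪u, x⟫_ℝ)).comp_hasFDerivAt x
          ((innerSL ℝ u).hasFDerivAt)
      have hfder : ∀ x, fderiv ℝ φ x = (psid a (⟪u, x⟫_ℝ)) • (innerSL ℝ u) :=
        fun x => (hfderphi x).fderiv
      have hmemφ : memE φ := by
        refine ⟨?_, ⟨a⁻¹ * (Real.pi / 2), fun x => psi_abs_le ha0 _⟩, ?_, ?_⟩
        · exact (psi_contDiff a).comp ((innerSL ℝ u).contDiff)
        · intro x i
          rw [hfder x]
          simp only [ContinuousLinearMap.coe_smul', Pi.smul_apply, innerSL_apply_apply,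
            smul_eq_mul, hinner_single i]
          rw [abs_mul]
          have hp1 : |psid a (⟪u, x⟫_ℝ)| ≤ 1 := by
            rw [abs_of_pos (psid_pos a _)]; exact psid_le_one a _
          calc |psid a (⟪u, x⟫_ℝ)| * |u i| ≤ 1 * 1 :=
              mul_le_mul hp1 (hui i) (abs_nonneg _) zero_le_one
            _ = 1 := one_mul 1
        · intro x i j
          have hfun : (fun y => fderiv ℝ φ y (EuclideanSpace.single i 1)) =
              fun y => (u i) * psid a (⟪u, y⟫_ℝ) := by
            funext y
            rw [hfder y]
            simp only [ContinuousLinearMap.coe_smul', Pi.smul_apply, innerSL_apply_apply,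
              smul_eq_mul, hinner_single i]
            ring
          rw [hfun]
          have hL2 : HasFDerivAt (fun y => (u i) * psid a (⟪u, y⟫_ℝ))
              ((u i * (-(2*a^2*(⟪u, x⟫_ℝ)) * (psid a (⟪u, x⟫_ℝ))^2)) • (innerSL ℝ u)) x := by
            have h := (psid_hasDerivAt a (⟪u, x⟫_ℝ)).comp_hasFDerivAt x
              ((innerSL ℝ u).hasFDerivAt)
            have h2 := h.const_mul (u i)
            convert h2 using 1
            any_goals rfl
            rw [smul_smul]
          rw [hL2.fderiv]
          simp only [ContinuousLinearMap.coe_smul', Pi.smul_apply, innerSL_apply_apply,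
            smul_eq_mul, hinner_single j]
          rw [abs_mul, abs_mul]
          have h3 := psid_deriv_abs_le ha0 ha1 (⟪u, x⟫_ℝ)
          calc |u i| * |(-(2*a^2*(⟪u, x⟫_ℝ)) * (psid a (⟪u, x⟫_ℝ))^2)| * |u j|
              ≤ 1 * 1 * 1 := by
                refine mul_le_mul (mul_le_mul (hui i) h3 (abs_nonneg _) zero_le_one)
                  (hui j) (abs_nonneg _) (by norm_num)
            _ = 1 := by norm_num
      -- the infimum bound for φ
      have hinfφ : δ - ε ≤ ⨅ p : ↥E × ↥F, (φ p.1 - φ p.2) := by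
        refine le_ciInf fun p => ?_
        obtain ⟨⟨x, hx⟩, ⟨y, hy⟩⟩ := p
        have h1 := hsep x hx y hy
        rw [inner_sub_right] at h1
        set t := ⟪u, x⟫_ℝ with htdef
        set s := ⟪u, y⟫_ℝ with hsdef
        have hts : δ ≤ t - s := h1
        have hst : s ≤ t := by linarith
        have htR : |t| ≤ R := hbound x (Or.inl hx)
        have hsR : |s| ≤ R := hbound y (Or.inr hy)
        have h2 := psi_incr ha0 hsR htR hst
        have h3 : δ - ε ≤ (1 - a^2*R^2) * (t - s) := by
          have hfac : 0 ≤ 1 - a^2*R^2 := by linarith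
          calc δ - ε ≤ δ - a^2*R^2*δ := by linarith
            _ = (1 - a^2*R^2) * δ := by ring
            _ ≤ (1 - a^2*R^2) * (t - s) := mul_le_mul_of_nonneg_left hts hfac
        simp only [hφdef]
        linarith
      have hle := le_ciSup hBddAbove (⟨φ, hmemφ⟩ :
        {φ : EuclideanSpace ℝ (Fin N) → ℝ // memE φ})
      rw [daviesDist]
      linarith [hinfφ.trans hle]
  · -- daviesDist ≤ √N * euclDist
    rw [hδeucl, daviesDist]
    exact ciSup_le hinf_le
end

section
/- (Twisted Laplacian L² bound, from the proof of Theorem 4.2.) Let N ≥ 1 be an integer, λ ∈ ℝ, φ ∈ ℰ, and let v : ℝ^N → ℂ be smooth and compactly supported. Then ∫_{ℝ^N} | e^{λφ(x)} Δ(e^{−λφ} v)(x) |² dx ≤ 16 N² (1 + λ⁴) ‖v‖₂² + 12 ‖Δv‖₂². -/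
open MeasureTheory

namespace TwistedAux

variable {N : ℕ}

/-- Directional (partial) derivative in coordinate direction `i`. -/
noncomputable def pd {F : Type*} [NormedAddCommGroup F] [NormedSpace ℝ F] (i : Fin N)
    (u : EuclideanSpace ℝ (Fin N) → F) (x : EuclideanSpace ℝ (Fin N)) : F :=
  fderiv ℝ u x (EuclideanSpace.single i 1)

lemma lap_eq (u : EuclideanSpace ℝ (Fin N) → ℂ) (x : EuclideanSpace ℝ (Fin N)) :
    lap u x = ∑ i, pd i (pd i u) x := rfl

variable {F : Type*} [NormedAddCommGroup F] [NormedSpace ℝ F]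

lemma contDiff_pd {u : EuclideanSpace ℝ (Fin N) → F} (hu : ContDiff ℝ (⊤ : ℕ∞) u) (i : Fin N) :
    ContDiff ℝ (⊤ : ℕ∞) (pd i u) :=
  (hu.fderiv_right (by simp)).clm_apply contDiff_const

lemma hcs_pd {u : EuclideanSpace ℝ (Fin N) → F} (hu : HasCompactSupport u) (i : Fin N) :
    HasCompactSupport (pd i u) :=
  hu.fderiv_apply ℝ _

lemma pd_add {f g : EuclideanSpace ℝ (Fin N) → F} {x} (i : Fin N)
    (hf : DifferentiableAt ℝ f x) (hg : DifferentiableAt ℝ g x) :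
    pd i (fun y => f y + g y) x = pd i f x + pd i g x := by
  unfold pd; rw [fderiv_fun_add hf hg]; rfl

lemma pd_mul {f g : EuclideanSpace ℝ (Fin N) → ℂ} {x} (i : Fin N)
    (hf : DifferentiableAt ℝ f x) (hg : DifferentiableAt ℝ g x) :
    pd i (fun y => f y * g y) x = pd i f x * g x + f x * pd i g x := by
  unfold pd
  rw [fderiv_fun_mul hf hg]
  simp only [ContinuousLinearMap.add_apply, ContinuousLinearMap.smul_apply, smul_eq_mul]
  ring

lemma pd_ofReal {ψ : EuclideanSpace ℝ (Fin N) → ℝ} {x} (i : Fin N)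
    (hψ : DifferentiableAt ℝ ψ x) :
    pd i (fun y => (ψ y : ℂ)) x = ((pd i ψ x : ℝ) : ℂ) := by
  have h : HasFDerivAt (fun y => (ψ y : ℂ))
      (Complex.ofRealCLM.comp (fderiv ℝ ψ x)) x :=
    Complex.ofRealCLM.hasFDerivAt.comp x hψ.hasFDerivAt
  unfold pd
  rw [h.fderiv]
  rfl

lemma pd_conj {f : EuclideanSpace ℝ (Fin N) → ℂ} {x} (i : Fin N)
    (hf : DifferentiableAt ℝ f x) :
    pd i (fun y => (starRingEnd ℂ) (f y)) x = (starRingEnd ℂ) (pd i f x) := by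
  have h : HasFDerivAt (fun y => (starRingEnd ℂ) (f y))
      ((Complex.conjCLE.toContinuousLinearMap).comp (fderiv ℝ f x)) x :=
    Complex.conjCLE.toContinuousLinearMap.hasFDerivAt.comp x hf.hasFDerivAt
  unfold pd
  rw [h.fderiv]
  rfl

lemma pd_neg_const_mul {ψ : EuclideanSpace ℝ (Fin N) → ℝ} {x} (i : Fin N) (c : ℝ)
    (hψ : DifferentiableAt ℝ ψ x) :
    pd i (fun y => -(c * ψ y)) x = -(c * pd i ψ x) := by
  unfold pd
  rw [fderiv_fun_neg, fderiv_const_mul hψ]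
  simp

lemma pd_exp {ψ : EuclideanSpace ℝ (Fin N) → ℝ} {x} (i : Fin N)
    (hψ : DifferentiableAt ℝ ψ x) :
    pd i (fun y => Real.exp (ψ y)) x = Real.exp (ψ x) * pd i ψ x := by
  unfold pd
  rw [fderiv_exp hψ]
  simp

end TwistedAux

namespace TwistedAux

variable {N : ℕ} {F : Type*} [NormedAddCommGroup F] [NormedSpace ℝ F]

lemma support_pd_subset {u : EuclideanSpace ℝ (Fin N) → F} (i : Fin N) :
    Function.support (pd i u) ⊆ tsupport u := by
  intro x hx
  apply support_fderiv_subset ℝ (f := u)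
  simp only [Function.mem_support] at hx ⊢
  exact fun h => hx (by simp [pd, h])

lemma hcs_lap {u : EuclideanSpace ℝ (Fin N) → ℂ} (hu : HasCompactSupport u) :
    HasCompactSupport (lap u) := by
  apply hu.mono'
  intro x hx
  simp only [Function.mem_support, lap_eq] at hx
  by_contra hxt
  apply hx
  refine Finset.sum_eq_zero fun i _ => ?_
  have h1 : x ∉ tsupport (pd i u) := fun h =>
    hxt ((closure_minimal (support_pd_subset i) isClosed_closure) h)
  by_contra h2
  exact h1 (support_pd_subset i h2)

lemma hcs_mul_left {A B : EuclideanSpace ℝ (Fin N) → ℂ} (hA : HasCompactSupport A) :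
    HasCompactSupport fun x => A x * B x :=
  hA.mono fun x hx => by
    simp only [Function.mem_support] at hx ⊢
    exact fun h => hx (by simp [h])

lemma hcs_mul_right {A B : EuclideanSpace ℝ (Fin N) → ℂ} (hB : HasCompactSupport B) :
    HasCompactSupport fun x => A x * B x :=
  hB.mono fun x hx => by
    simp only [Function.mem_support] at hx ⊢
    exact fun h => hx (by simp [h])

lemma cont_lap {u : EuclideanSpace ℝ (Fin N) → ℂ} (hu : ContDiff ℝ (⊤ : ℕ∞) u) :
    Continuous (lap u) := by
  have : Continuous fun x => ∑ i, pd i (pd i u) x :=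
    continuous_finset_sum _ fun i _ => (contDiff_pd (contDiff_pd hu i) i).continuous
  exact this

end TwistedAux


open TwistedAux in
set_option maxHeartbeats 4000000 in
/-- **Twisted Laplacian `L²` bound** (from the proof of Theorem 4.2): for `λ ∈ ℝ`,
`φ ∈ ℰ` and smooth compactly supported `v : ℝ^N → ℂ`,
`∫ |e^{λφ} Δ(e^{-λφ} v)|² ≤ 16N²(1+λ⁴)‖v‖₂² + 12‖Δv‖₂²`. -/
theorem twisted_laplacian_L2_bound (N : ℕ) (hN : 1 ≤ N) (l : ℝ)
    (φ : EuclideanSpace ℝ (Fin N) → ℝ) (hφ : memE φ)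
    (v : EuclideanSpace ℝ (Fin N) → ℂ)
    (hv : ContDiff ℝ (⊤ : ℕ∞) v) (hsupp : HasCompactSupport v) :
    (∫ x, ‖(Real.exp (l * φ x) : ℂ) *
        lap (fun y => (Real.exp (-(l * φ y)) : ℂ) * v y) x‖ ^ 2) ≤
      16 * (N : ℝ) ^ 2 * (1 + l ^ 4) * (∫ x, ‖v x‖ ^ 2) +
        12 * ∫ x, ‖lap v x‖ ^ 2 := by
  classical
  obtain ⟨hφc, -, hφ1, hφ2⟩ := hφ
  set G : EuclideanSpace ℝ (Fin N) → ℂ := fun y => (Real.exp (-(l * φ y)) : ℂ) * v y with hGdef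
  set g : EuclideanSpace ℝ (Fin N) → ℂ := fun y => ((Real.exp (-(l * φ y)) : ℝ) : ℂ) with hgdef
  set c : Fin N → EuclideanSpace ℝ (Fin N) → ℂ := fun i y => ((-(l * pd i φ y) : ℝ) : ℂ) with hcdef
  set r : Fin N → EuclideanSpace ℝ (Fin N) → ℝ :=
    fun i y => -(l * pd i (pd i φ) y) + (l * pd i φ y) ^ 2 with hrdef
  have hvd : Differentiable ℝ v := hv.differentiable (by simp)
  have hψ : ContDiff ℝ (⊤ : ℕ∞) (fun y : EuclideanSpace ℝ (Fin N) => -(l * φ y)) := (contDiff_const.mul hφc).neg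
  have hgR : ContDiff ℝ (⊤ : ℕ∞) (fun y : EuclideanSpace ℝ (Fin N) => Real.exp (-(l * φ y))) := Real.contDiff_exp.comp hψ
  have hg : ContDiff ℝ (⊤ : ℕ∞) g := Complex.ofRealCLM.contDiff.comp hgR
  have hc : ∀ i, ContDiff ℝ (⊤ : ℕ∞) (c i) := fun i =>
    Complex.ofRealCLM.contDiff.comp ((contDiff_const.mul (contDiff_pd hφc i)).neg)
  have hG : ContDiff ℝ (⊤ : ℕ∞) G := hg.mul hv
  have hpv : ∀ i, ContDiff ℝ (⊤ : ℕ∞) (pd i v) := fun i => contDiff_pd hv i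
  -- derivative of the exponential factor
  have hpdg : ∀ (i : Fin N) (x : EuclideanSpace ℝ (Fin N)), pd i g x = c i x * g x := by
    intro i x
    have h1 : pd i g x = ((pd i (fun y : EuclideanSpace ℝ (Fin N) => Real.exp (-(l * φ y))) x : ℝ) : ℂ) :=
      pd_ofReal i ((hgR.differentiable (by simp)) x)
    have h2 : pd i (fun y : EuclideanSpace ℝ (Fin N) => Real.exp (-(l * φ y))) x
        = Real.exp (-(l * φ x)) * pd i (fun y : EuclideanSpace ℝ (Fin N) => -(l * φ y)) x :=
      pd_exp i ((hψ.differentiable (by simp)) x)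
    have h3 : pd i (fun y : EuclideanSpace ℝ (Fin N) => -(l * φ y)) x = -(l * pd i φ x) :=
      pd_neg_const_mul i l ((hφc.differentiable (by simp)) x)
    rw [h1, h2, h3, hcdef, hgdef]
    push_cast
    ring
  have hpdc : ∀ (i : Fin N) (x : EuclideanSpace ℝ (Fin N)), pd i (c i) x = ((-(l * pd i (pd i φ) x) : ℝ) : ℂ) := by
    intro i x
    have h1 : pd i (c i) x = ((pd i (fun y => -(l * pd i φ y)) x : ℝ) : ℂ) :=
      pd_ofReal i (((contDiff_const.mul (contDiff_pd hφc i)).neg.differentiable (by simp)) x)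
    have h2 : pd i (fun y : EuclideanSpace ℝ (Fin N) => -(l * pd i φ y)) x = -(l * pd i (pd i φ) x) :=
      pd_neg_const_mul i l (((contDiff_pd hφc i).differentiable (by simp)) x)
    rw [h1, h2]
  have hGd1 : ∀ (i : Fin N) (x : EuclideanSpace ℝ (Fin N)), pd i G x = c i x * (g x * v x) + g x * pd i v x := by
    intro i x
    rw [hGdef]
    rw [pd_mul i ((hg.differentiable (by simp)) x) (hvd x), hpdg i x]
    ring
  have hGd2 : ∀ (i : Fin N) (x : EuclideanSpace ℝ (Fin N)), pd i (pd i G) x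
      = g x * (((r i x : ℝ) : ℂ) * v x + 2 * (c i x * pd i v x) + pd i (pd i v) x) := by
    intro i x
    have e1 : pd i G = fun y => c i y * (g y * v y) + g y * pd i v y :=
      funext fun y => hGd1 i y
    rw [e1]
    rw [pd_add i (((hc i).mul (hg.mul hv)).differentiable (by simp) x)
      ((hg.mul (hpv i)).differentiable (by simp) x)]
    rw [pd_mul i (((hc i).differentiable (by simp)) x) ((hg.mul hv).differentiable (by simp) x)]
    rw [pd_mul i ((hg.differentiable (by simp)) x) ((hpv i).differentiable (by simp) x)]
    rw [hpdc i x, hpdg i x]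
    have e2 : pd i (fun y => g y * v y) x = c i x * g x * v x + g x * pd i v x := by
      have := hGd1 i x
      rw [hGdef] at this
      rw [this]; ring
    rw [e2, hrdef]
    simp only [hcdef]
    push_cast
    ring
  have hexp : ∀ x : EuclideanSpace ℝ (Fin N), (Real.exp (l * φ x) : ℂ) * g x = 1 := by
    intro x
    rw [hgdef, ← Complex.ofReal_mul, ← Real.exp_add, add_neg_cancel, Real.exp_zero,
      Complex.ofReal_one]
  have hkey : ∀ x : EuclideanSpace ℝ (Fin N), (Real.exp (l * φ x) : ℂ) * lap G x
      = lap v x + (∑ i, 2 * (c i x * pd i v x)) + ((∑ i, r i x : ℝ) : ℂ) * v x := by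
    intro x
    rw [lap_eq G x]
    have e3 : ∑ i, pd i (pd i G) x
        = g x * (lap v x + (∑ i, 2 * (c i x * pd i v x)) + ((∑ i, r i x : ℝ) : ℂ) * v x) := by
      rw [Finset.sum_congr rfl fun i _ => hGd2 i x, ← Finset.mul_sum]
      congr 1
      rw [lap_eq v x, Finset.sum_add_distrib, Finset.sum_add_distrib, ← Finset.sum_mul]
      push_cast
      ring
    rw [e3, ← mul_assoc, hexp x, one_mul]
  -- pointwise coefficient bounds
  have habs_c : ∀ (i : Fin N) (x : EuclideanSpace ℝ (Fin N)), ‖c i x‖ ≤ |l| := by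
    intro i x
    rw [hcdef]
    simp only [Complex.norm_real, Real.norm_eq_abs]
    have h1 : |pd i φ x| ≤ 1 := hφ1 x i
    rw [abs_neg, abs_mul]
    nlinarith [abs_nonneg l, abs_nonneg (pd i φ x)]
  have habs_r : ∀ (i : Fin N) (x : EuclideanSpace ℝ (Fin N)), |r i x| ≤ |l| + l ^ 2 := by
    intro i x
    have h1 : |pd i (pd i φ) x| ≤ 1 := hφ2 x i i
    have h2 : |pd i φ x| ≤ 1 := hφ1 x i
    rw [hrdef]
    refine (abs_add_le _ _).trans ?_
    rw [abs_neg, abs_mul, abs_of_nonneg (sq_nonneg (l * pd i φ x)), mul_pow]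
    have h3 : (pd i φ x) ^ 2 ≤ 1 := by nlinarith [sq_abs (pd i φ x), abs_nonneg (pd i φ x)]
    nlinarith [abs_nonneg l, sq_nonneg l, abs_nonneg (pd i (pd i φ) x)]
  -- pointwise bound on the twisted Laplacian
  have hpt : ∀ x : EuclideanSpace ℝ (Fin N),
      ‖(Real.exp (l * φ x) : ℂ) * lap G x‖ ^ 2 ≤
        3 * ‖lap v x‖ ^ 2 + 12 * l ^ 2 * N * (∑ i, ‖pd i v x‖ ^ 2)
          + 3 * (N : ℝ) ^ 2 * (|l| + l ^ 2) ^ 2 * ‖v x‖ ^ 2 := by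
    intro x
    rw [hkey x]
    have h2C : ‖(2 : ℂ)‖ = 2 := by simp
    have hb : ‖∑ i, 2 * (c i x * pd i v x)‖ ≤ 2 * |l| * ∑ i, ‖pd i v x‖ := by
      refine (norm_sum_le _ _).trans ?_
      rw [show (2 : ℝ) * |l| * ∑ i, ‖pd i v x‖ = ∑ i, 2 * |l| * ‖pd i v x‖ by
        rw [Finset.mul_sum]]
      refine Finset.sum_le_sum fun i _ => ?_
      rw [norm_mul, norm_mul, h2C]
      nlinarith [habs_c i x, norm_nonneg (pd i v x), norm_nonneg (c i x), abs_nonneg l]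
    have hcv : ‖((∑ i, r i x : ℝ) : ℂ) * v x‖ ≤ (N : ℝ) * (|l| + l ^ 2) * ‖v x‖ := by
      rw [norm_mul, Complex.norm_real, Real.norm_eq_abs]
      have h1 : |∑ i, r i x| ≤ (N : ℝ) * (|l| + l ^ 2) := by
        refine (Finset.abs_sum_le_sum_abs _ _).trans ?_
        refine (Finset.sum_le_sum fun i _ => habs_r i x).trans ?_
        rw [Finset.sum_const, Finset.card_univ, Fintype.card_fin, nsmul_eq_mul]
      exact mul_le_mul_of_nonneg_right h1 (norm_nonneg _)
    have htri : ‖lap v x + (∑ i, 2 * (c i x * pd i v x)) + ((∑ i, r i x : ℝ) : ℂ) * v x‖ ≤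
        ‖lap v x‖ + 2 * |l| * (∑ i, ‖pd i v x‖) + (N : ℝ) * (|l| + l ^ 2) * ‖v x‖ :=
      (norm_add₃_le).trans (add_le_add (add_le_add le_rfl hb) hcv)
    have hs2 : (∑ i, ‖pd i v x‖) ^ 2 ≤ (N : ℝ) * ∑ i, ‖pd i v x‖ ^ 2 := by
      have h := sq_sum_le_card_mul_sum_sq (s := (Finset.univ : Finset (Fin N)))
        (f := fun i => ‖pd i v x‖)
      simpa using h
    have hsq := pow_le_pow_left₀ (norm_nonneg _) htri 2
    set a := ‖lap v x‖ with hadef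
    set s := ∑ i, ‖pd i v x‖ with hsdef
    set q := ∑ i, ‖pd i v x‖ ^ 2 with hqdef
    set m := ‖v x‖ with hmdef
    have e4 : (a + 2 * |l| * s + (N : ℝ) * (|l| + l ^ 2) * m) ^ 2
        ≤ 3 * a ^ 2 + 12 * l ^ 2 * s ^ 2 + 3 * (N : ℝ) ^ 2 * (|l| + l ^ 2) ^ 2 * m ^ 2 := by
      nlinarith [sq_nonneg (a - 2 * |l| * s), sq_nonneg (a - (N : ℝ) * (|l| + l ^ 2) * m),
        sq_nonneg (2 * |l| * s - (N : ℝ) * (|l| + l ^ 2) * m), sq_abs l]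
    have e5 : 12 * l ^ 2 * s ^ 2 ≤ 12 * l ^ 2 * ((N : ℝ) * q) :=
      mul_le_mul_of_nonneg_left hs2 (by positivity)
    calc ‖lap v x + (∑ i, 2 * (c i x * pd i v x)) + ((∑ i, r i x : ℝ) : ℂ) * v x‖ ^ 2
        ≤ (a + 2 * |l| * s + (N : ℝ) * (|l| + l ^ 2) * m) ^ 2 := hsq
      _ ≤ 3 * a ^ 2 + 12 * l ^ 2 * s ^ 2 + 3 * (N : ℝ) ^ 2 * (|l| + l ^ 2) ^ 2 * m ^ 2 := e4
      _ ≤ 3 * a ^ 2 + 12 * l ^ 2 * ((N : ℝ) * q) + 3 * (N : ℝ) ^ 2 * (|l| + l ^ 2) ^ 2 * m ^ 2 := by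
          linarith [e5]
      _ = 3 * a ^ 2 + 12 * l ^ 2 * N * q + 3 * (N : ℝ) ^ 2 * (|l| + l ^ 2) ^ 2 * m ^ 2 := by ring
  -- integrability
  have hnsq0 : (fun z : ℂ => ‖z‖ ^ 2) 0 = 0 := by simp
  have hInt_v2 : Integrable (fun x => ‖v x‖ ^ 2) :=
    (hv.continuous.norm.pow 2).integrable_of_hasCompactSupport
      (hsupp.comp_left (g := fun z : ℂ => ‖z‖ ^ 2) hnsq0)
  have hcs_lapv : HasCompactSupport (lap v) := hcs_lap hsupp
  have hInt_lap2 : Integrable (fun x => ‖lap v x‖ ^ 2) :=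
    ((cont_lap hv).norm.pow 2).integrable_of_hasCompactSupport
      (hcs_lapv.comp_left (g := fun z : ℂ => ‖z‖ ^ 2) hnsq0)
  have hInt_pd2 : ∀ i : Fin N, Integrable (fun x => ‖pd i v x‖ ^ 2) := fun i =>
    ((hpv i).continuous.norm.pow 2).integrable_of_hasCompactSupport
      ((hcs_pd hsupp i).comp_left (g := fun z : ℂ => ‖z‖ ^ 2) hnsq0)
  have hInt_q : Integrable (fun x => ∑ i, ‖pd i v x‖ ^ 2) :=
    integrable_finset_sum _ fun i _ => hInt_pd2 i
  have hInt_vlap : Integrable (fun x => ‖v x‖ * ‖lap v x‖) :=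
    (hv.continuous.norm.mul (cont_lap hv).norm).integrable_of_hasCompactSupport
      ((hsupp.norm).mul_right)
  -- integration by parts
  have hconjv_cd : ContDiff ℝ (⊤ : ℕ∞) (fun y => (starRingEnd ℂ) (v y)) :=
    Complex.conjCLE.toContinuousLinearMap.contDiff.comp hv
  have hcs_conj : HasCompactSupport (fun y => (starRingEnd ℂ) (v y)) :=
    hsupp.comp_left (g := starRingEnd ℂ) (map_zero _)
  have hconj_mul : ∀ z : ℂ, (starRingEnd ℂ) z * z = ((‖z‖ ^ 2 : ℝ) : ℂ) := fun z => by
    rw [← Complex.normSq_eq_conj_mul_self, Complex.normSq_eq_norm_sq]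
  have hibp : ∀ i : Fin N, (∫ x, (starRingEnd ℂ) (v x) * pd i (pd i v) x)
      = -(((∫ x, ‖pd i v x‖ ^ 2) : ℝ) : ℂ) := by
    intro i
    have h1 : Integrable (fun x => fderiv ℝ (fun y => (starRingEnd ℂ) (v y)) x
        (EuclideanSpace.single i 1) * pd i v x) :=
      ((contDiff_pd hconjv_cd i).continuous.mul (hpv i).continuous).integrable_of_hasCompactSupport
        (hcs_mul_right (hcs_pd hsupp i))
    have h2 : Integrable (fun x => (starRingEnd ℂ) (v x) *
        fderiv ℝ (pd i v) x (EuclideanSpace.single i 1)) :=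
      (hconjv_cd.continuous.mul (contDiff_pd (hpv i) i).continuous).integrable_of_hasCompactSupport
        (hcs_mul_left hcs_conj)
    have h3 : Integrable (fun x => (starRingEnd ℂ) (v x) * pd i v x) :=
      (hconjv_cd.continuous.mul (hpv i).continuous).integrable_of_hasCompactSupport
        (hcs_mul_left hcs_conj)
    have h4 := integral_mul_fderiv_eq_neg_fderiv_mul_of_integrable h1 h2 h3
      (fun x _ => hconjv_cd.differentiable (by simp) x) (fun x _ => (hpv i).differentiable (by simp) x)
    have h5 : (∫ x, (starRingEnd ℂ) (v x) * pd i (pd i v) x)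
        = -∫ x, fderiv ℝ (fun y => (starRingEnd ℂ) (v y)) x (EuclideanSpace.single i 1)
            * pd i v x := h4
    rw [h5]
    congr 1
    have h6 : (fun x => fderiv ℝ (fun y => (starRingEnd ℂ) (v y)) x (EuclideanSpace.single i 1)
        * pd i v x) = fun x => (((‖pd i v x‖ ^ 2 : ℝ)) : ℂ) := by
      funext x
      have := pd_conj i (hvd x)
      rw [show fderiv ℝ (fun y => (starRingEnd ℂ) (v y)) x (EuclideanSpace.single i 1)
          = pd i (fun y => (starRingEnd ℂ) (v y)) x from rfl, this, hconj_mul]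
    rw [h6]
    exact Complex.ofRealLI.integral_comp_comm _
  have hflip : (∫ x, (starRingEnd ℂ) (v x) * lap v x)
      = -(((∫ x, ∑ i, ‖pd i v x‖ ^ 2) : ℝ) : ℂ) := by
    have h7 : (∫ x, (starRingEnd ℂ) (v x) * lap v x)
        = ∑ i, ∫ x, (starRingEnd ℂ) (v x) * pd i (pd i v) x := by
      rw [← integral_finset_sum]
      · congr 1; funext x; rw [lap_eq, Finset.mul_sum]
      · intro i _
        exact (hconjv_cd.continuous.mul
          (contDiff_pd (hpv i) i).continuous).integrable_of_hasCompactSupport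
          (hcs_mul_left hcs_conj)
    have h8 : (∫ x, ∑ i, ‖pd i v x‖ ^ 2) = ∑ i, ∫ x, ‖pd i v x‖ ^ 2 :=
      integral_finset_sum _ fun i _ => hInt_pd2 i
    rw [h7, Finset.sum_congr rfl fun i _ => hibp i, h8]
    push_cast
    rw [Finset.sum_neg_distrib]
  have hI1 : (∫ x, ∑ i, ‖pd i v x‖ ^ 2) ≤ ∫ x, ‖v x‖ * ‖lap v x‖ := by
    have hI1nn : 0 ≤ ∫ x, ∑ i, ‖pd i v x‖ ^ 2 :=
      integral_nonneg fun x => Finset.sum_nonneg fun i _ => sq_nonneg _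
    calc (∫ x, ∑ i, ‖pd i v x‖ ^ 2)
        = ‖(((∫ x, ∑ i, ‖pd i v x‖ ^ 2) : ℝ) : ℂ)‖ := by
          rw [Complex.norm_real, Real.norm_eq_abs, abs_of_nonneg hI1nn]
      _ = ‖∫ x, (starRingEnd ℂ) (v x) * lap v x‖ := by rw [hflip, norm_neg]
      _ ≤ ∫ x, ‖(starRingEnd ℂ) (v x) * lap v x‖ := norm_integral_le_integral_norm _
      _ = ∫ x, ‖v x‖ * ‖lap v x‖ := by
          congr 1; funext x; rw [norm_mul, RCLike.norm_conj]
  -- main integral estimate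
  have hmain : (∫ x, ‖(Real.exp (l * φ x) : ℂ) * lap G x‖ ^ 2)
      ≤ 3 * (∫ x, ‖lap v x‖ ^ 2) + 12 * l ^ 2 * N * (∫ x, ∑ i, ‖pd i v x‖ ^ 2)
        + 3 * (N : ℝ) ^ 2 * (|l| + l ^ 2) ^ 2 * (∫ x, ‖v x‖ ^ 2) := by
    have hrhs : Integrable (fun x => 3 * ‖lap v x‖ ^ 2
        + 12 * l ^ 2 * N * (∑ i, ‖pd i v x‖ ^ 2)
        + 3 * (N : ℝ) ^ 2 * (|l| + l ^ 2) ^ 2 * ‖v x‖ ^ 2) :=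
      ((hInt_lap2.const_mul 3).add (hInt_q.const_mul _)).add (hInt_v2.const_mul _)
    have h9 := integral_mono_of_nonneg
      (ae_of_all _ fun x => by positivity) hrhs (ae_of_all _ hpt)
    refine h9.trans_eq ?_
    have hA : Integrable (fun x => 3 * ‖lap v x‖ ^ 2
        + 12 * l ^ 2 * N * (∑ i, ‖pd i v x‖ ^ 2)) :=
      (hInt_lap2.const_mul 3).add (hInt_q.const_mul _)
    rw [integral_add hA (hInt_v2.const_mul _),
      integral_add (hInt_lap2.const_mul 3) (hInt_q.const_mul _),
      integral_const_mul, integral_const_mul, integral_const_mul]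
  -- Young step
  have hyoung : 12 * l ^ 2 * N * (∫ x, ‖v x‖ * ‖lap v x‖)
      ≤ 4 * l ^ 4 * (N : ℝ) ^ 2 * (∫ x, ‖v x‖ ^ 2) + 9 * (∫ x, ‖lap v x‖ ^ 2) := by
    have hpw : ∀ x, 12 * l ^ 2 * N * (‖v x‖ * ‖lap v x‖)
        ≤ 4 * l ^ 4 * (N : ℝ) ^ 2 * ‖v x‖ ^ 2 + 9 * ‖lap v x‖ ^ 2 := fun x => by
      nlinarith [sq_nonneg (2 * l ^ 2 * N * ‖v x‖ - 3 * ‖lap v x‖),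
        norm_nonneg (v x), norm_nonneg (lap v x), sq_nonneg (l * ‖v x‖), sq_nonneg l]
    calc 12 * l ^ 2 * N * (∫ x, ‖v x‖ * ‖lap v x‖)
        = ∫ x, 12 * l ^ 2 * N * (‖v x‖ * ‖lap v x‖) := (integral_const_mul _ _).symm
      _ ≤ ∫ x, (4 * l ^ 4 * (N : ℝ) ^ 2 * ‖v x‖ ^ 2 + 9 * ‖lap v x‖ ^ 2) :=
          integral_mono (hInt_vlap.const_mul (12 * l ^ 2 * N))
            ((hInt_v2.const_mul _).add (hInt_lap2.const_mul _)) hpw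
      _ = 4 * l ^ 4 * (N : ℝ) ^ 2 * (∫ x, ‖v x‖ ^ 2) + 9 * (∫ x, ‖lap v x‖ ^ 2) := by
          have h1' : Integrable (fun x => 4 * l ^ 4 * (N : ℝ) ^ 2 * ‖v x‖ ^ 2) :=
            hInt_v2.const_mul _
          have h2' : Integrable (fun x => 9 * ‖lap v x‖ ^ 2) := hInt_lap2.const_mul _
          rw [integral_add h1' h2', integral_const_mul, integral_const_mul]
  -- final arithmetic
  have hI0nn : 0 ≤ ∫ x, ‖v x‖ ^ 2 := integral_nonneg fun x => sq_nonneg _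
  have hsc : 3 * (|l| + l ^ 2) ^ 2 + 4 * l ^ 4 ≤ 16 * (1 + l ^ 4) := by
    nlinarith [sq_nonneg (|l| * (|l| - 1)), sq_nonneg (l ^ 2 - 1), sq_abs l, abs_nonneg l,
      sq_nonneg (l ^ 2)]
  have hfin : (3 * (N : ℝ) ^ 2 * (|l| + l ^ 2) ^ 2 + 4 * l ^ 4 * (N : ℝ) ^ 2)
        * (∫ x, ‖v x‖ ^ 2) ≤ 16 * (N : ℝ) ^ 2 * (1 + l ^ 4) * (∫ x, ‖v x‖ ^ 2) := by
    refine mul_le_mul_of_nonneg_right ?_ hI0nn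
    nlinarith [hsc, sq_nonneg (N : ℝ)]
  have hIq := mul_le_mul_of_nonneg_left hI1 (by positivity : (0:ℝ) ≤ 12 * l ^ 2 * N)
  linarith [hmain, hyoung, hfin, hIq]
end
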